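/- If G is a δ-regular digraph (δ ≥ 2) with N vertices and diameter D which is not a directed cycle, then its line digraph L(G) is δ-regular, has δ·N vertices, and has diameter D + 1. -/

import Mathlib

/-!
A walk of length `m + 1` in `L(G)` from the arc `(a, u)` to the arc `(v, b)` is the same thing as
a walk of length `m` in `G` from `u` to `v`, so distances grow by exactly one, except that the
distance between equal arcs is `0`. Take `u, v` at distance `D` in `G`; since `u` has in-degree at
least `2`, there is an arc `(a, u)` with `a ≠ v`, and then `(a, u)` and any arc `(v, b)` are
distinct arcs at distance `D + 1`. Regularity and the arc count come from the bijections
between out-arcs (in-arcs) of the arc `(u, v)` and out-neighbours of `v` (in-neighbours of `u`).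
-/

/-- A directed walk of length `l` from `u` to `v` in the digraph with arc relation `Adj`. -/
def DWalk {V : Type*} (Adj : V → V → Prop) (u v : V) (l : ℕ) : Prop :=
  ∃ f : ℕ → V, f 0 = u ∧ f l = v ∧ ∀ i < l, Adj (f i) (f (i + 1))

/-- The digraph with arc relation `Adj` has diameter exactly `D`: every ordered pair of
vertices is joined by a directed walk of length at most `D`, and some pair is at
distance exactly `D`. -/
def HasDiam {V : Type*} (Adj : V → V → Prop) (D : ℕ) : Prop :=
  (∀ u v : V, ∃ l ≤ D, DWalk Adj u v l) ∧ ∃ u v : V, ∀ l, DWalk Adj u v l → D ≤ l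

section LineDigraph

open Finset

variable {V : Type*} {Adj : V → V → Prop}

namespace DWalk

theorem zero_iff {u v : V} : DWalk Adj u v 0 ↔ u = v := by
  constructor
  · rintro ⟨f, rfl, rfl, -⟩
    rfl
  · rintro rfl
    exact ⟨fun _ => u, rfl, rfl, fun i hi => absurd hi (Nat.not_lt_zero i)⟩

theorem succ_iff {u v : V} {l : ℕ} :
    DWalk Adj u v (l + 1) ↔ ∃ w, Adj u w ∧ DWalk Adj w v l := by
  constructor
  · rintro ⟨f, rfl, rfl, hf⟩
    exact ⟨f 1, hf 0 l.succ_pos, fun i => f (i + 1), rfl, rfl,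
      fun i hi => hf (i + 1) (by omega)⟩
  · rintro ⟨w, huw, g, rfl, rfl, hg⟩
    refine ⟨fun i => match i with | 0 => u | i + 1 => g i, rfl, rfl, ?_⟩
    rintro (_ | i) hi
    · exact huw
    · exact hg i (by omega)

end DWalk

abbrev Arc (Adj : V → V → Prop) : Type _ := {p : V × V // Adj p.1 p.2}

def lineAdj (Adj : V → V → Prop) (e f : Arc Adj) : Prop := e.val.2 = f.val.1

theorem DWalk.lineAdj_succ {u v : V} {l : ℕ} (hw : DWalk Adj u v l) {e f : Arc Adj}
    (he : e.val.2 = u) (hf : f.val.1 = v) : DWalk (lineAdj Adj) e f (l + 1) := by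
  induction l generalizing u e with
  | zero =>
    obtain rfl := zero_iff.1 hw
    exact succ_iff.2 ⟨f, he.trans hf.symm, zero_iff.2 rfl⟩
  | succ l ih =>
    obtain ⟨w, huw, hw⟩ := succ_iff.1 hw
    exact succ_iff.2 ⟨⟨(u, w), huw⟩, he, ih hw rfl⟩

theorem DWalk.of_lineAdj_succ {m : ℕ} {e f : Arc Adj} (hw : DWalk (lineAdj Adj) e f (m + 1)) :
    DWalk Adj e.val.2 f.val.1 m := by
  induction m generalizing e with
  | zero =>
    obtain ⟨g, heg, hg⟩ := succ_iff.1 hw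
    obtain rfl := zero_iff.1 hg
    exact zero_iff.2 heg
  | succ m ih =>
    obtain ⟨g, heg, hg⟩ := succ_iff.1 hw
    have hadj : Adj e.val.2 g.val.2 := by
      rw [show e.val.2 = g.val.1 from heg]
      exact g.prop
    exact succ_iff.2 ⟨g.val.2, hadj, ih hg⟩

theorem HasDiam.lineAdj {D : ℕ} (hD : HasDiam Adj D) (hout : ∀ v, ∃ w, Adj v w)
    (hin : ∀ u v, ∃ a, Adj a u ∧ a ≠ v) : HasDiam (lineAdj Adj) (D + 1) := by
  obtain ⟨hle, u, v, hfar⟩ := hD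
  refine ⟨fun e f => ?_, ?_⟩
  · obtain ⟨l, hl, hw⟩ := hle e.val.2 f.val.1
    exact ⟨l + 1, by omega, hw.lineAdj_succ rfl rfl⟩
  · obtain ⟨a, hau, hav⟩ := hin u v
    obtain ⟨b, hvb⟩ := hout v
    refine ⟨⟨(a, u), hau⟩, ⟨(v, b), hvb⟩, fun m hm => ?_⟩
    cases m with
    | zero => exact absurd (congrArg (fun e : Arc Adj => e.val.1) (DWalk.zero_iff.1 hm)) hav
    | succ k => exact Nat.succ_le_succ (hfar k hm.of_lineAdj_succ)

section Degrees

variable [Fintype V] [DecidableRel Adj]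

theorem card_filter_lineAdj_out [DecidableEq V] (e : Arc Adj) :
    #{f : Arc Adj | e.val.2 = f.val.1} = #{w | Adj e.val.2 w} := by
  refine card_bij (fun f _ => f.val.2) ?_ ?_ ?_
  · intro f hf
    simp only [mem_filter, mem_univ, true_and] at hf ⊢
    exact hf ▸ f.prop
  · intro f hf g hg hfg
    simp only [mem_filter, mem_univ, true_and] at hf hg
    exact Subtype.ext (Prod.ext (hf.symm.trans hg) hfg)
  · intro w hw
    simp only [mem_filter, mem_univ, true_and] at hw
    exact ⟨⟨(e.val.2, w), hw⟩, by simp, rfl⟩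

theorem card_filter_lineAdj_in [DecidableEq V] (e : Arc Adj) :
    #{f : Arc Adj | f.val.2 = e.val.1} = #{w | Adj w e.val.1} := by
  refine card_bij (fun f _ => f.val.1) ?_ ?_ ?_
  · intro f hf
    simp only [mem_filter, mem_univ, true_and] at hf ⊢
    exact hf ▸ f.prop
  · intro f hf g hg hfg
    simp only [mem_filter, mem_univ, true_and] at hf hg
    exact Subtype.ext (Prod.ext hfg (hf.trans hg.symm))
  · intro w hw
    simp only [mem_filter, mem_univ, true_and] at hw
    exact ⟨⟨(w, e.val.1), hw⟩, by simp, rfl⟩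

theorem card_arc_of_card_out {δ : ℕ} (hout : ∀ v, #{w | Adj v w} = δ) :
    Fintype.card (Arc Adj) = δ * Fintype.card V := by
  rw [Fintype.card_congr (Equiv.subtypeProdEquivSigmaSubtype fun a b => Adj a b),
    Fintype.card_sigma]
  simp only [Fintype.card_subtype, hout, sum_const, card_univ, smul_eq_mul, mul_comm]

end Degrees

end LineDigraph

theorem stmt_12_general {V : Type*} [Fintype V] [DecidableEq V]
    (Adj : V → V → Prop) [DecidableRel Adj] (δ N D : ℕ) (hδ : 2 ≤ δ)
    (hN : Fintype.card V = N)
    (hreg : ∀ v : V, (Finset.univ.filter fun w => Adj v w).card = δ ∧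
      (Finset.univ.filter fun w => Adj w v).card = δ)
    (hdiam : HasDiam Adj D) :
    (∀ e : {p : V × V // Adj p.1 p.2},
      (Finset.univ.filter fun f : {p : V × V // Adj p.1 p.2} => e.val.2 = f.val.1).card = δ ∧
      (Finset.univ.filter fun f : {p : V × V // Adj p.1 p.2} => f.val.2 = e.val.1).card = δ) ∧
    Fintype.card {p : V × V // Adj p.1 p.2} = δ * N ∧
    HasDiam (fun e f : {p : V × V // Adj p.1 p.2} => e.val.2 = f.val.1) (D + 1) := by
  have hout (v : V) : ∃ w, Adj v w := by
    obtain ⟨w, hw⟩ := Finset.card_pos.1 (by rw [(hreg v).1]; omega)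
    exact ⟨w, (Finset.mem_filter.1 hw).2⟩
  have hin (u v : V) : ∃ a, Adj a u ∧ a ≠ v := by
    obtain ⟨a, ha, hav⟩ := Finset.exists_mem_ne (by rw [(hreg u).2]; omega) v
    exact ⟨a, (Finset.mem_filter.1 ha).2, hav⟩
  refine ⟨fun e => ⟨?_, ?_⟩, hN ▸ card_arc_of_card_out fun v => (hreg v).1,
    hdiam.lineAdj hout hin⟩
  · exact (card_filter_lineAdj_out e).trans (hreg _).1
  · exact (card_filter_lineAdj_in e).trans (hreg _).2

theorem stmt_12 {V : Type*} [Fintype V] [DecidableEq V]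
    (Adj : V → V → Prop) [DecidableRel Adj] (δ N D : ℕ) (hδ : 2 ≤ δ)
    (hN : Fintype.card V = N)
    (hreg : ∀ v : V, (Finset.univ.filter fun w => Adj v w).card = δ ∧
      (Finset.univ.filter fun w => Adj w v).card = δ)
    (hdiam : HasDiam Adj D)
    (hnotcycle : ¬ ∃ e : V ≃ ZMod (Fintype.card V),
      ∀ u v : V, Adj u v ↔ (e v : ZMod (Fintype.card V)) = e u + 1) :
    (∀ e : {p : V × V // Adj p.1 p.2},
      (Finset.univ.filter fun f : {p : V × V // Adj p.1 p.2} => e.val.2 = f.val.1).card = δ ∧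
      (Finset.univ.filter fun f : {p : V × V // Adj p.1 p.2} => f.val.2 = e.val.1).card = δ) ∧
    Fintype.card {p : V × V // Adj p.1 p.2} = δ * N ∧
    HasDiam (fun e f : {p : V × V // Adj p.1 p.2} => e.val.2 = f.val.1) (D + 1) :=
  stmt_12_general Adj δ N D hδ hN hreg hdiam
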